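/- arXiv:1007.3517 — 6 statements merged into one kernel-verified Lean document; each statement's English description precedes it below -/
import Mathlib

section
/- For every field k and every n ≥ 1, choose for each permutation w ∈ S_n a reduced word w' of w. Then the set {σ_{w'} : w ∈ S_n} is a basis of the algebra H_n^- as a k-vector space; in particular dim_k H_n^- = n!. -/
/-!
STATEMENT 0. Let `k` be a field and `n ≥ 1`; we write `n = m + 1`.  The
Lipshitz–Ozsváth–Thurston algebra `H_n^-` is the unital associative `k`-algebra with
generators `σ_1, …, σ_{n-1}` (indexed here by `Fin m`) and relations
`σ_i² = 0`, `σ_i σ_j + σ_j σ_i = 0` for `|i - j| > 1`, and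
`σ_i σ_{i+1} σ_i = σ_{i+1} σ_i σ_{i+1}`.  For every choice of a reduced word `c w`
for each permutation `w ∈ S_n`, the family `w ↦ σ_{c w}` is a basis of `H_n^-` as a
`k`-vector space; in particular `dim_k H_n^- = n!`.
-/

/-- The defining relations of the Lipshitz–Ozsváth–Thurston algebra `H_{m+1}^-`. -/
inductive LOTRel (k : Type) [Field k] (m : ℕ) :
    FreeAlgebra k (Fin m) → FreeAlgebra k (Fin m) → Prop
  | sq (i : Fin m) :
      LOTRel k m (FreeAlgebra.ι k i * FreeAlgebra.ι k i) 0
  | anticomm (i j : Fin m) (h : (i : ℕ) + 1 < j ∨ (j : ℕ) + 1 < i) :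
      LOTRel k m (FreeAlgebra.ι k i * FreeAlgebra.ι k j + FreeAlgebra.ι k j * FreeAlgebra.ι k i) 0
  | braid (i j : Fin m) (h : (j : ℕ) = (i : ℕ) + 1) :
      LOTRel k m (FreeAlgebra.ι k i * FreeAlgebra.ι k j * FreeAlgebra.ι k i)
                 (FreeAlgebra.ι k j * FreeAlgebra.ι k i * FreeAlgebra.ι k j)

/-- The Lipshitz–Ozsváth–Thurston algebra `H_{m+1}^-`. -/
abbrev LOT (k : Type) [Field k] (m : ℕ) := RingQuot (LOTRel k m)

/-- The generator `σ_i` of `H_{m+1}^-`. -/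
noncomputable def lotSigma (k : Type) [Field k] (m : ℕ) (i : Fin m) : LOT k m :=
  RingQuot.mkAlgHom k (LOTRel k m) (FreeAlgebra.ι k i)

/-- `σ_{w'} = σ_{i_1} ⋯ σ_{i_r}` for a word `w' = (i_1, …, i_r)`. -/
noncomputable def sigmaWord (k : Type) [Field k] (m : ℕ) (l : List (Fin m)) : LOT k m :=
  (l.map (lotSigma k m)).prod

/-- The simple transposition `s_i = (i, i+1) ∈ S_{m+1}`. -/
def sTrans (m : ℕ) (i : Fin m) : Equiv.Perm (Fin (m + 1)) :=
  Equiv.swap i.castSucc i.succ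

/-- The permutation `s_{i_1} ⋯ s_{i_r}` associated to a word `(i_1, …, i_r)`. -/
def permOfWord (m : ℕ) (l : List (Fin m)) : Equiv.Perm (Fin (m + 1)) :=
  (l.map (sTrans m)).prod

/-- `l` is a reduced word of `w`: its product is `w` and it has minimal length. -/
def IsReducedWord (m : ℕ) (w : Equiv.Perm (Fin (m + 1))) (l : List (Fin m)) : Prop :=
  permOfWord m l = w ∧ ∀ l' : List (Fin m), permOfWord m l' = w → l.length ≤ l'.length

/-!
Spanning: `σ_i σ_{c w}` is `± σ_{c (s_i w)}` or `0`, because any two reduced words of the same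
permutation give the same element up to sign. This is Matsumoto's argument by induction on the
length: two reduced words starting with different letters `i`, `j` are compared through a reduced
word starting with `j i` (if `|i - j| > 1`) or `j i j` (if `|i - j| = 1`), and only the
anticommutation relation introduces a sign.

Independence: `H_{m+1}^-` acts on `k[S_{m+1}]` by letting `σ_i` send `e_q` to `± e_{q s_i}` if
`s_i` increases the number of inversions of `q` and to `0` otherwise. The sign is `(-1)` to an
explicit count of inversions, for which the defining relations can be checked directly. Then
`σ_{c w} e_1 = ± e_{w⁻¹}`, so the `σ_{c w}` are linearly independent.
-/

open Equiv Finset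

section Transpositions

variable {m : ℕ}

@[simp] lemma sTrans_apply_castSucc (i : Fin m) : sTrans m i i.castSucc = i.succ :=
  Equiv.swap_apply_left _ _

@[simp] lemma sTrans_apply_succ (i : Fin m) : sTrans m i i.succ = i.castSucc :=
  Equiv.swap_apply_right _ _

lemma sTrans_apply_of_val_ne {i : Fin m} {a : Fin (m + 1)} (h₁ : (a : ℕ) ≠ i)
    (h₂ : (a : ℕ) ≠ i + 1) : sTrans m i a = a :=
  Equiv.swap_apply_of_ne_of_ne (Fin.ne_of_val_ne (by simpa using h₁))
    (Fin.ne_of_val_ne (by simpa using h₂))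

@[simp] lemma sTrans_mul_self (i : Fin m) : sTrans m i * sTrans m i = 1 :=
  Equiv.swap_mul_self _ _

@[simp] lemma sTrans_inv (i : Fin m) : (sTrans m i)⁻¹ = sTrans m i :=
  Equiv.swap_inv _ _

@[simp] lemma sTrans_mul_sTrans_mul (i : Fin m) (w : Perm (Fin (m + 1))) :
    sTrans m i * (sTrans m i * w) = w := by
  rw [← mul_assoc, sTrans_mul_self, one_mul]

@[simp] lemma mul_sTrans_mul_sTrans (i : Fin m) (q : Perm (Fin (m + 1))) :
    q * sTrans m i * sTrans m i = q := by
  rw [mul_assoc, sTrans_mul_self, mul_one]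

lemma sTrans_val_lt_iff {i : Fin m} {t : ℕ} (ht : (i : ℕ) + 1 < t ∨ t ≤ i) (a : Fin (m + 1)) :
    (sTrans m i a : ℕ) < t ↔ (a : ℕ) < t := by
  rcases eq_or_ne a i.castSucc with rfl | h₁
  · simp; omega
  rcases eq_or_ne a i.succ with rfl | h₂
  · simp; omega
  rw [sTrans, Equiv.swap_apply_of_ne_of_ne h₁ h₂]

lemma sTrans_apply_castSucc_of_far {i j : Fin m} (h : (i : ℕ) + 1 < j ∨ (j : ℕ) + 1 < i) :
    sTrans m j i.castSucc = i.castSucc :=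
  sTrans_apply_of_val_ne (by simp; omega) (by simp; omega)

lemma sTrans_apply_succ_of_far {i j : Fin m} (h : (i : ℕ) + 1 < j ∨ (j : ℕ) + 1 < i) :
    sTrans m j i.succ = i.succ :=
  sTrans_apply_of_val_ne (by simp; omega) (by simp; omega)

lemma sTrans_commute {i j : Fin m} (h : (i : ℕ) + 1 < j ∨ (j : ℕ) + 1 < i) :
    sTrans m i * sTrans m j = sTrans m j * sTrans m i := by
  refine Equiv.Perm.Disjoint.commute fun a ↦ ?_
  by_cases ha : (a : ℕ) = i ∨ (a : ℕ) = i + 1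
  · exact Or.inr (sTrans_apply_of_val_ne (by omega) (by omega))
  · exact Or.inl (sTrans_apply_of_val_ne (by omega) (by omega))

/-- For `j = i + 1`, the action of `s_i` and `s_j` on the points they move, each point written
as one of `i.castSucc`, `i.succ`, `j.succ`. -/
lemma sTrans_apply_of_adjacent {i j : Fin m} (hj : (j : ℕ) = i + 1) :
    j.castSucc = i.succ ∧ sTrans m i j.succ = j.succ ∧ sTrans m j i.castSucc = i.castSucc ∧
      sTrans m j i.succ = j.succ ∧ sTrans m j j.succ = i.succ := by
  have hcs : j.castSucc = i.succ := Fin.ext (by simp [hj])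
  refine ⟨hcs, sTrans_apply_of_val_ne (by simp; omega) (by simp; omega),
    sTrans_apply_of_val_ne (by simp; omega) (by simp; omega), ?_, ?_⟩
  · rw [← hcs, sTrans_apply_castSucc]
  · rw [sTrans_apply_succ, hcs]

lemma sTrans_braid {i j : Fin m} (hj : (j : ℕ) = i + 1) :
    sTrans m i * sTrans m j * sTrans m i = sTrans m j * sTrans m i * sTrans m j := by
  have hcs : j.castSucc = i.succ := (sTrans_apply_of_adjacent hj).1
  have h₁ : j.succ ≠ i.succ := by simp [Fin.ext_iff, hj]
  have h₂ : j.succ ≠ i.castSucc := by simp [Fin.ext_iff, hj]; omega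
  have h₃ : i.castSucc ≠ i.succ := Fin.castSucc_lt_succ.ne
  unfold sTrans
  rw [hcs]
  calc _ = Equiv.swap i.castSucc j.succ := by
        rw [Equiv.swap_comm i.castSucc i.succ, Equiv.swap_comm i.succ j.succ,
          Equiv.swap_mul_swap_mul_swap h₁ h₂]
    _ = _ := by rw [Equiv.swap_mul_swap_mul_swap h₃ h₂.symm, Equiv.swap_comm]

lemma mul_sTrans_braid (q : Perm (Fin (m + 1))) {i j : Fin m} (hj : (j : ℕ) = i + 1) :
    q * sTrans m i * sTrans m j * sTrans m i = q * sTrans m j * sTrans m i * sTrans m j := by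
  rw [mul_assoc, mul_assoc, ← mul_assoc (sTrans m i), sTrans_braid hj]
  simp only [mul_assoc]

end Transpositions

lemma Fin.filter_val_lt_succ {n : ℕ} (b : Fin n) :
    ({a | (a : ℕ) < b + 1} : Finset (Fin n)) = insert b ({a | (a : ℕ) < b} : Finset (Fin n)) := by
  ext a
  simp only [mem_filter, mem_univ, true_and, mem_insert, Fin.ext_iff]
  omega

namespace Equiv.Perm

section General

variable {n : ℕ}

def countAbove (q : Perm (Fin n)) (t : ℕ) (x : Fin n) : ℕ := #{a : Fin n | (a : ℕ) < t ∧ x < q a}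

def invAt (q : Perm (Fin n)) (b : Fin n) : ℕ := q.countAbove b (q b)

def invBefore (q : Perm (Fin n)) (t : ℕ) : ℕ :=
  ∑ b ∈ ({b | (b : ℕ) < t} : Finset (Fin n)), q.invAt b

def invCount (q : Perm (Fin n)) : ℕ := q.invBefore n

variable {q : Perm (Fin n)}

lemma countAbove_mul {τ : Perm (Fin n)} {t : ℕ} (h : ∀ a, (τ a : ℕ) < t ↔ (a : ℕ) < t)
    (x : Fin n) : (q * τ).countAbove t x = q.countAbove t x :=
  card_equiv τ fun a ↦ by
    rw [mem_filter, mem_filter]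
    simp [h]

lemma countAbove_succ (b x : Fin n) :
    q.countAbove (b + 1) x = q.countAbove b x + if x < q b then 1 else 0 := by
  rw [countAbove, countAbove, ← filter_filter, ← filter_filter, Fin.filter_val_lt_succ,
    filter_insert]
  split_ifs with h
  · rw [card_insert_of_notMem (by simp)]
  · rfl

lemma invBefore_succ (b : Fin n) : q.invBefore (b + 1) = q.invBefore b + q.invAt b := by
  rw [invBefore, invBefore, Fin.filter_val_lt_succ, sum_insert (by simp), add_comm]

lemma invCount_one : (1 : Perm (Fin n)).invCount = 0 := by
  unfold invCount invBefore invAt countAbove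
  exact sum_eq_zero fun _ _ ↦ card_eq_zero.2 <| filter_eq_empty_iff.2 fun _ _ h ↦ by
    simp only [one_apply] at h
    omega

end General

variable {m : ℕ} {q : Perm (Fin (m + 1))} {i : Fin m}

lemma invAt_castSucc :
    q.invAt i.castSucc = q.countAbove i (q i.castSucc) := rfl

lemma invAt_succ :
    q.invAt i.succ = q.countAbove i (q i.succ) + if q i.succ < q i.castSucc then 1 else 0 := by
  rw [invAt]
  simpa using countAbove_succ (q := q) i.castSucc (q i.succ)

lemma invAt_mul_sTrans {b : Fin (m + 1)} (hb : (i : ℕ) + 1 < b ∨ (b : ℕ) < i) :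
    (q * sTrans m i).invAt b = q.invAt b := by
  rw [invAt, invAt, countAbove_mul (sTrans_val_lt_iff (by omega)), Perm.mul_apply,
    sTrans_apply_of_val_ne (by omega) (by omega)]

lemma invBefore_mul_sTrans_of_le {t : ℕ} (ht : t ≤ i) :
    (q * sTrans m i).invBefore t = q.invBefore t :=
  sum_congr rfl fun _ hb ↦ invAt_mul_sTrans (Or.inr ((mem_filter.1 hb).2.trans_le ht))

lemma countAbove_mul_sTrans {t : ℕ} (ht : (i : ℕ) + 1 < t ∨ t ≤ i) (x : Fin (m + 1)) :
    (q * sTrans m i).countAbove t x = q.countAbove t x :=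
  countAbove_mul (sTrans_val_lt_iff ht) x

lemma invBefore_mul_sTrans (h : q i.castSucc < q i.succ) {t : ℕ} (ht : (i : ℕ) + 1 < t) :
    (q * sTrans m i).invBefore t = q.invBefore t + 1 := by
  set S : Finset (Fin (m + 1)) := {b | (b : ℕ) < t}
  have hpair : {i.castSucc, i.succ} ⊆ S := by
    simp only [S, insert_subset_iff, singleton_subset_iff, mem_filter, mem_univ, true_and,
      Fin.val_castSucc, Fin.val_succ]
    omega
  have hoff : ∀ b ∈ S \ {i.castSucc, i.succ}, (q * sTrans m i).invAt b = q.invAt b := by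
    intro b hb
    simp only [mem_sdiff, mem_insert, mem_singleton, not_or, Fin.ext_iff, Fin.val_castSucc,
      Fin.val_succ] at hb
    exact invAt_mul_sTrans (by omega)
  rw [invBefore, invBefore, ← sum_sdiff hpair, ← sum_sdiff hpair (f := q.invAt),
    sum_pair Fin.castSucc_lt_succ.ne, sum_pair Fin.castSucc_lt_succ.ne, sum_congr rfl hoff,
    invAt_castSucc, invAt_castSucc, invAt_succ, invAt_succ, countAbove_mul_sTrans (Or.inr le_rfl),
    countAbove_mul_sTrans (Or.inr le_rfl)]
  simp only [Perm.mul_apply, sTrans_apply_castSucc, sTrans_apply_succ, h, not_lt_of_gt h,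
    if_true, if_false]
  ring

lemma invCount_mul_sTrans_of_lt (h : q i.castSucc < q i.succ) :
    (q * sTrans m i).invCount = q.invCount + 1 :=
  invBefore_mul_sTrans h (by omega)

lemma invCount_mul_sTrans_of_gt (h : q i.succ < q i.castSucc) :
    (q * sTrans m i).invCount + 1 = q.invCount := by
  simpa using (invCount_mul_sTrans_of_lt (q := q * sTrans m i) (i := i) (by simpa using h)).symm

lemma ascent_or_descent (q : Perm (Fin (m + 1))) (i : Fin m) :
    q i.castSucc < q i.succ ∨ q i.succ < q i.castSucc :=
  lt_or_gt_of_ne (q.injective.ne Fin.castSucc_lt_succ.ne)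

lemma exists_descent (h : q ≠ 1) : ∃ i : Fin m, q i.succ < q i.castSucc := by
  by_contra! hasc
  refine h (Equiv.ext fun a ↦ StrictMono.apply_eq (f := q) ?_)
  exact Fin.strictMono_iff_lt_succ.2 fun i ↦
    (hasc i).lt_of_ne (q.injective.ne Fin.castSucc_lt_succ.ne)

end Equiv.Perm

open Equiv.Perm

section SignExponent

variable {m : ℕ}

def signExp (i : Fin m) (q : Perm (Fin (m + 1))) : ℕ :=
  q.invBefore i + q.countAbove i (q i.succ) +
    q.countAbove i (q i.castSucc) * q.countAbove i (q i.succ)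

variable {i j : Fin m} {q : Perm (Fin (m + 1))}

lemma signExp_mul_sTrans_of_lt (hij : (i : ℕ) + 1 < j) :
    signExp i (q * sTrans m j) = signExp i q := by
  simp only [signExp, invBefore_mul_sTrans_of_le (by omega : (i : ℕ) ≤ j),
    countAbove_mul_sTrans (Or.inr (by omega : (i : ℕ) ≤ j)), Perm.mul_apply,
    sTrans_apply_castSucc_of_far (Or.inl hij), sTrans_apply_succ_of_far (Or.inl hij)]

lemma signExp_mul_sTrans_of_gt (hij : (i : ℕ) + 1 < j) (h : q i.castSucc < q i.succ) :
    signExp j (q * sTrans m i) = signExp j q + 1 := by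
  simp only [signExp, invBefore_mul_sTrans h hij, countAbove_mul_sTrans (Or.inl hij),
    Perm.mul_apply, sTrans_apply_castSucc_of_far (Or.inr hij),
    sTrans_apply_succ_of_far (Or.inr hij)]
  ring

lemma signExp_of_adjacent (hj : (j : ℕ) = i + 1) (r : Perm (Fin (m + 1))) :
    signExp j r = r.invBefore i + r.countAbove i (r i.castSucc)
      + (r.countAbove i (r j.succ) + if r j.succ < r i.castSucc then 1 else 0)
      + (r.countAbove i (r i.succ) + if r i.succ < r i.castSucc then 1 else 0)
        * (r.countAbove i (r j.succ) + if r j.succ < r i.castSucc then 1 else 0) := by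
  have hcs := (sTrans_apply_of_adjacent hj).1
  have ht : (j : ℕ) = i.castSucc + 1 := by simpa using hj
  rw [signExp, ht, invBefore_succ, countAbove_succ, countAbove_succ, hcs]
  simp [invAt_castSucc]

lemma signExp_braid (hj : (j : ℕ) = i + 1) (hxy : q i.castSucc < q i.succ)
    (hyz : q i.succ < q j.succ) :
    ((signExp i q + signExp j (q * sTrans m i) + signExp i (q * sTrans m i * sTrans m j) : ℕ) :
      ZMod 2) =
    ((signExp j q + signExp i (q * sTrans m j) + signExp j (q * sTrans m j * sTrans m i) : ℕ) :
      ZMod 2) := by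
  have hxz := hxy.trans hyz
  obtain ⟨-, hij, hji₀, hji₁, hjj⟩ := sTrans_apply_of_adjacent hj
  have hIi : ∀ r : Perm (Fin (m + 1)), (r * sTrans m i).invBefore i = r.invBefore i :=
    fun r ↦ invBefore_mul_sTrans_of_le le_rfl
  have hIj : ∀ r : Perm (Fin (m + 1)), (r * sTrans m j).invBefore i = r.invBefore i :=
    fun r ↦ invBefore_mul_sTrans_of_le (by omega)
  have hCi : ∀ (r : Perm (Fin (m + 1))) x,
      (r * sTrans m i).countAbove i x = r.countAbove i x :=
    fun r ↦ countAbove_mul_sTrans (Or.inr le_rfl)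
  have hCj : ∀ (r : Perm (Fin (m + 1))) x,
      (r * sTrans m j).countAbove i x = r.countAbove i x :=
    fun r ↦ countAbove_mul_sTrans (Or.inr (by omega))
  -- Multiplying by `s_i`, `s_j` only permutes positions `≥ i`, so all six exponents are
  -- polynomials in `q.invBefore i` and `q.countAbove i` at `q i.castSucc`, `q i.succ`, `q j.succ`.
  rw [signExp_of_adjacent hj, signExp_of_adjacent hj, signExp_of_adjacent hj]
  simp only [signExp, hIi, hIj, hCi, hCj, Perm.mul_apply, hij,
    hji₀, hji₁, hjj, sTrans_apply_castSucc, sTrans_apply_succ, hxy, hyz, hxz, lt_asymm hxy,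
    lt_asymm hyz, lt_asymm hxz, if_true, if_false]
  push_cast
  ring_nf
  reduce_mod_char

end SignExponent

section ReducedWords

variable {m : ℕ} {i j : Fin m} {w : Perm (Fin (m + 1))} {l : List (Fin m)}

@[simp] lemma permOfWord_nil : permOfWord m [] = 1 := rfl

@[simp] lemma permOfWord_cons (i : Fin m) (l : List (Fin m)) :
    permOfWord m (i :: l) = sTrans m i * permOfWord m l := by
  simp [permOfWord]

@[simp] lemma inv_sTrans_mul (i : Fin m) (w : Perm (Fin (m + 1))) :
    (sTrans m i * w)⁻¹ = w⁻¹ * sTrans m i := by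
  rw [mul_inv_rev, sTrans_inv]

lemma invCount_inv_permOfWord_le (l : List (Fin m)) :
    (permOfWord m l)⁻¹.invCount ≤ l.length := by
  induction l with
  | nil => simp [invCount_one]
  | cons i l ih =>
    rw [permOfWord_cons, inv_sTrans_mul, List.length_cons]
    rcases ascent_or_descent (permOfWord m l)⁻¹ i with h | h
    · rw [invCount_mul_sTrans_of_lt h]
      omega
    · have := invCount_mul_sTrans_of_gt h
      omega

lemma exists_permOfWord_eq (w : Perm (Fin (m + 1))) :
    ∃ l, permOfWord m l = w ∧ l.length = w⁻¹.invCount := by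
  induction h : w⁻¹.invCount using Nat.strong_induction_on generalizing w with
  | _ N ih =>
  by_cases hw : w = 1
  · subst hw
    exact ⟨[], rfl, by simpa [invCount_one] using h⟩
  obtain ⟨i, hi⟩ := exists_descent (inv_ne_one.2 hw)
  have hlt := invCount_mul_sTrans_of_gt hi
  obtain ⟨l, hl, hlen⟩ :=
    ih (w⁻¹ * sTrans m i).invCount (by omega) (sTrans m i * w) (by rw [inv_sTrans_mul])
  exact ⟨i :: l, by simp [hl], by simp only [List.length_cons, hlen]; omega⟩

lemma isReducedWord_iff : IsReducedWord m w l ↔ permOfWord m l = w ∧ l.length = w⁻¹.invCount := by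
  refine ⟨fun ⟨hl, hmin⟩ ↦ ⟨hl, ?_⟩, fun ⟨hl, hlen⟩ ↦ ⟨hl, fun l' hl' ↦ ?_⟩⟩
  · obtain ⟨l', hl', hlen'⟩ := exists_permOfWord_eq w
    have := invCount_inv_permOfWord_le l
    have := hmin l' hl'
    rw [hl] at *
    omega
  · rw [hlen, ← hl']
    exact invCount_inv_permOfWord_le l'

lemma exists_isReducedWord (w : Perm (Fin (m + 1))) : ∃ l, IsReducedWord m w l := by
  simpa only [isReducedWord_iff] using exists_permOfWord_eq w

lemma IsReducedWord.length_eq {l' : List (Fin m)} (h : IsReducedWord m w l)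
    (h' : IsReducedWord m w l') : l.length = l'.length :=
  le_antisymm (h.2 l' h'.1) (h'.2 l h.1)

lemma isReducedWord_cons_iff :
    IsReducedWord m w (i :: l) ↔
      w⁻¹ i.succ < w⁻¹ i.castSucc ∧ IsReducedWord m (sTrans m i * w) l := by
  simp only [isReducedWord_iff, permOfWord_cons, inv_sTrans_mul, List.length_cons,
    ← eq_inv_mul_iff_mul_eq, sTrans_inv]
  constructor
  · rintro ⟨hl, hlen⟩
    have hle := invCount_inv_permOfWord_le l
    rw [hl, inv_sTrans_mul] at hle
    rcases ascent_or_descent w⁻¹ i with h | h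
    · rw [invCount_mul_sTrans_of_lt h] at hle
      omega
    · have := invCount_mul_sTrans_of_gt h
      exact ⟨h, hl, by omega⟩
  · rintro ⟨h, hl, hlen⟩
    have := invCount_mul_sTrans_of_gt h
    exact ⟨hl, by omega⟩

lemma IsReducedWord.cons (h : IsReducedWord m w l) (hi : w⁻¹ i.castSucc < w⁻¹ i.succ) :
    IsReducedWord m (sTrans m i * w) (i :: l) :=
  isReducedWord_cons_iff.2
    ⟨by simpa only [inv_sTrans_mul, Perm.mul_apply, sTrans_apply_succ,
      sTrans_apply_castSucc] using hi, by simpa only [sTrans_mul_sTrans_mul] using h⟩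

lemma exists_isReducedWord_of_far (hij : (i : ℕ) + 1 < j)
    (hi : w⁻¹ i.succ < w⁻¹ i.castSucc) (hj : w⁻¹ j.succ < w⁻¹ j.castSucc) :
    ∃ r, IsReducedWord m (sTrans m i * w) (j :: r) ∧ IsReducedWord m (sTrans m j * w) (i :: r) := by
  obtain ⟨r, hr⟩ := exists_isReducedWord (sTrans m j * (sTrans m i * w))
  refine ⟨r, ?_, ?_⟩
  · have := hr.cons (i := j) (by
      simp only [inv_sTrans_mul, Perm.mul_apply, sTrans_apply_castSucc, sTrans_apply_succ,
        sTrans_apply_castSucc_of_far (Or.inr hij), sTrans_apply_succ_of_far (Or.inr hij)]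
      exact hj)
    rwa [sTrans_mul_sTrans_mul] at this
  · have := hr.cons (i := i) (by
      simp only [inv_sTrans_mul, Perm.mul_apply, sTrans_apply_castSucc, sTrans_apply_succ,
        sTrans_apply_castSucc_of_far (Or.inl hij), sTrans_apply_succ_of_far (Or.inl hij)]
      exact hi)
    rwa [← mul_assoc, sTrans_commute (Or.inl hij), mul_assoc, sTrans_mul_sTrans_mul] at this

lemma exists_isReducedWord_of_adjacent (hij : (j : ℕ) = i + 1)
    (hi : w⁻¹ i.succ < w⁻¹ i.castSucc) (hj : w⁻¹ j.succ < w⁻¹ j.castSucc) :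
    ∃ r, IsReducedWord m (sTrans m i * w) (j :: i :: r) ∧
      IsReducedWord m (sTrans m j * w) (i :: j :: r) := by
  obtain ⟨hcs, hij', hji₀, hji₁, hjj⟩ := sTrans_apply_of_adjacent hij
  rw [hcs] at hj
  have hbraid : sTrans m i * (sTrans m j * (sTrans m i * w)) =
      sTrans m j * (sTrans m i * (sTrans m j * w)) := by
    simp only [← mul_assoc, sTrans_braid hij]
  obtain ⟨r, hr⟩ := exists_isReducedWord (sTrans m i * (sTrans m j * (sTrans m i * w)))
  refine ⟨r, ?_, ?_⟩
  · have h₁ := hr.cons (i := i) (by simp only [inv_sTrans_mul, Perm.mul_apply,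
      sTrans_apply_castSucc, sTrans_apply_succ, hij', hji₀, hji₁]; exact hj)
    have h₂ := h₁.cons (i := j) (by simp only [inv_sTrans_mul, Perm.mul_apply,
      sTrans_apply_castSucc, sTrans_apply_succ, hcs, hij', hji₁, hjj]; exact hj.trans hi)
    simpa only [sTrans_mul_sTrans_mul] using h₂
  · rw [hbraid] at hr
    have h₁ := hr.cons (i := j) (by simp only [inv_sTrans_mul, Perm.mul_apply,
      sTrans_apply_succ, hcs, hij', hji₀, hji₁, hjj]; exact hi)
    have h₂ := h₁.cons (i := i) (by simp only [inv_sTrans_mul, Perm.mul_apply,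
      sTrans_apply_castSucc, sTrans_apply_succ, hji₀, hji₁, hjj]; exact hj.trans hi)
    simpa only [sTrans_mul_sTrans_mul] using h₂

end ReducedWords

section Relations

variable {k : Type} [Field k] {m : ℕ} {i j : Fin m}

lemma lotSigma_mul_self (i : Fin m) : lotSigma k m i * lotSigma k m i = 0 := by
  have h := RingQuot.mkAlgHom_rel k (LOTRel.sq (k := k) i)
  rwa [map_mul, map_zero] at h

lemma lotSigma_anticomm (h : (i : ℕ) + 1 < j ∨ (j : ℕ) + 1 < i) :
    lotSigma k m i * lotSigma k m j = -(lotSigma k m j * lotSigma k m i) := by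
  have h := RingQuot.mkAlgHom_rel k (LOTRel.anticomm (k := k) i j h)
  rw [map_add, map_mul, map_mul, map_zero] at h
  exact eq_neg_of_add_eq_zero_left h

lemma lotSigma_braid (h : (j : ℕ) = i + 1) :
    lotSigma k m i * lotSigma k m j * lotSigma k m i =
      lotSigma k m j * lotSigma k m i * lotSigma k m j := by
  have h := RingQuot.mkAlgHom_rel k (LOTRel.braid (k := k) i j h)
  rwa [map_mul, map_mul, map_mul, map_mul] at h

@[simp] lemma sigmaWord_nil : sigmaWord k m [] = 1 := rfl

@[simp] lemma sigmaWord_cons (i : Fin m) (l : List (Fin m)) :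
    sigmaWord k m (i :: l) = lotSigma k m i * sigmaWord k m l := by
  simp [sigmaWord]

end Relations

section SignedMatsumoto

variable (k : Type) [Field k] (m : ℕ)

def ReducedWordsAgreeUpToSign (N : ℕ) : Prop :=
  ∀ (w : Perm (Fin (m + 1))) (a b : List (Fin m)), IsReducedWord m w a →
    IsReducedWord m w b → a.length < N → ∃ ε : ℤˣ, sigmaWord k m a = ε • sigmaWord k m b

variable {k m} {N : ℕ} {i j : Fin m} {w : Perm (Fin (m + 1))} {a b : List (Fin m)}

lemma exists_units_smul_cons_of_far (IH : ReducedWordsAgreeUpToSign k m N)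
    (hij : (i : ℕ) + 1 < j) (ha : IsReducedWord m w (i :: a)) (hb : IsReducedWord m w (j :: b))
    (hN : a.length < N) : ∃ ε : ℤˣ, sigmaWord k m (i :: a) = ε • sigmaWord k m (j :: b) := by
  have hlen := ha.length_eq hb
  obtain ⟨hi, ha⟩ := isReducedWord_cons_iff.1 ha
  obtain ⟨hj, hb⟩ := isReducedWord_cons_iff.1 hb
  obtain ⟨r, hri, hrj⟩ := exists_isReducedWord_of_far hij hi hj
  obtain ⟨ε₁, h₁⟩ := IH _ _ _ ha hri hN
  obtain ⟨ε₂, h₂⟩ := IH _ _ _ hb hrj (by simp only [List.length_cons] at hlen; omega)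
  have hc : lotSigma k m i * (lotSigma k m j * sigmaWord k m r) =
      -(lotSigma k m j * (lotSigma k m i * sigmaWord k m r)) := by
    rw [← mul_assoc, ← mul_assoc, lotSigma_anticomm (Or.inl hij)]
    exact neg_mul (lotSigma k m j * lotSigma k m i) (sigmaWord k m r)
  refine ⟨-(ε₁ * ε₂⁻¹), ?_⟩
  rw [sigmaWord_cons, sigmaWord_cons, h₁, h₂, sigmaWord_cons, sigmaWord_cons, mul_smul_comm,
    mul_smul_comm, hc, smul_smul, neg_mul, inv_mul_cancel_right, Units.neg_smul]
  exact smul_neg ε₁ _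

lemma exists_units_smul_cons_of_adjacent (IH : ReducedWordsAgreeUpToSign k m N)
    (hij : (j : ℕ) = i + 1) (ha : IsReducedWord m w (i :: a)) (hb : IsReducedWord m w (j :: b))
    (hN : a.length < N) : ∃ ε : ℤˣ, sigmaWord k m (i :: a) = ε • sigmaWord k m (j :: b) := by
  have hlen := ha.length_eq hb
  obtain ⟨hi, ha⟩ := isReducedWord_cons_iff.1 ha
  obtain ⟨hj, hb⟩ := isReducedWord_cons_iff.1 hb
  obtain ⟨r, hri, hrj⟩ := exists_isReducedWord_of_adjacent hij hi hj
  obtain ⟨ε₁, h₁⟩ := IH _ _ _ ha hri hN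
  obtain ⟨ε₂, h₂⟩ := IH _ _ _ hb hrj (by simp only [List.length_cons] at hlen; omega)
  refine ⟨ε₁ * ε₂⁻¹, ?_⟩
  simp only [sigmaWord_cons, h₁, h₂, mul_smul_comm, smul_smul, inv_mul_cancel_right, ← mul_assoc,
    lotSigma_braid hij]

lemma reducedWordsAgreeUpToSign (N : ℕ) : ReducedWordsAgreeUpToSign k m N := by
  induction N with
  | zero => exact fun _ _ _ _ _ h ↦ absurd h (Nat.not_lt_zero _)
  | succ N IH =>
  intro w a b ha hb hN
  have hlen := ha.length_eq hb
  rcases a with _ | ⟨i, a⟩ <;> rcases b with _ | ⟨j, b⟩ <;> simp only [List.length_cons,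
    List.length_nil] at hlen hN
  · exact ⟨1, (one_smul _ _).symm⟩
  · omega
  · omega
  have symm {x y : LOT k m} : (∃ ε : ℤˣ, y = ε • x) → ∃ ε : ℤˣ, x = ε • y :=
    fun ⟨ε, h⟩ ↦ ⟨ε⁻¹, eq_inv_smul_iff.2 h.symm⟩
  rcases lt_trichotomy (i : ℕ) j with hij | hij | hij
  · rcases (by omega : (i : ℕ) + 1 < j ∨ (j : ℕ) = i + 1) with h | h
    · exact exists_units_smul_cons_of_far IH h ha hb (by omega)
    · exact exists_units_smul_cons_of_adjacent IH h ha hb (by omega)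
  · obtain rfl : i = j := Fin.ext hij
    obtain ⟨ε, h⟩ := IH _ _ _ (isReducedWord_cons_iff.1 ha).2 (isReducedWord_cons_iff.1 hb).2
      (by omega)
    exact ⟨ε, by rw [sigmaWord_cons, sigmaWord_cons, h, mul_smul_comm]⟩
  · rcases (by omega : (j : ℕ) + 1 < i ∨ (i : ℕ) = j + 1) with h | h
    · exact symm (exists_units_smul_cons_of_far IH h hb ha (by omega))
    · exact symm (exists_units_smul_cons_of_adjacent IH h hb ha (by omega))

theorem sigmaWord_eq_units_smul_of_isReducedWord (ha : IsReducedWord m w a)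
    (hb : IsReducedWord m w b) : ∃ ε : ℤˣ, sigmaWord k m a = ε • sigmaWord k m b :=
  reducedWordsAgreeUpToSign _ w a b ha hb (Nat.lt_succ_self _)

end SignedMatsumoto

section Representation

open Finsupp

variable (k : Type*) [CommRing k] (m : ℕ)

noncomputable def lotRep (i : Fin m) : Module.End k (Perm (Fin (m + 1)) →₀ k) :=
  Finsupp.lsum k fun q ↦
    if q i.castSucc < q i.succ then (-1 : k) ^ signExp i q • lsingle (q * sTrans m i) else 0

variable {k m} {i j : Fin m}

lemma lotRep_single (i : Fin m) (q : Perm (Fin (m + 1))) (a : k) :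
    lotRep k m i (single q a) =
      if q i.castSucc < q i.succ then (-1 : k) ^ signExp i q • single (q * sTrans m i) a
      else 0 := by
  rw [lotRep, lsum_single]
  split_ifs <;> rfl

lemma lotRep_mul_lotRep_single (i j : Fin m) (q : Perm (Fin (m + 1))) (a : k) :
    (lotRep k m i * lotRep k m j) (single q a) =
      if q j.castSucc < q j.succ ∧ (q * sTrans m j) i.castSucc < (q * sTrans m j) i.succ then
        (-1 : k) ^ (signExp j q + signExp i (q * sTrans m j)) •
          single (q * sTrans m j * sTrans m i) a
      else 0 := by
  rw [Module.End.mul_apply, lotRep_single]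
  by_cases hj : q j.castSucc < q j.succ
  · rw [if_pos hj, map_smul, lotRep_single]
    by_cases hi : (q * sTrans m j) i.castSucc < (q * sTrans m j) i.succ
    · rw [if_pos hi, if_pos ⟨hj, hi⟩, smul_smul, pow_add]
    · rw [if_neg hi, if_neg fun h ↦ hi h.2, smul_zero]
  · rw [if_neg hj, if_neg fun h ↦ hj h.1, map_zero]

lemma lotRep_mul_lotRep_mul_lotRep_single (i j : Fin m) (q : Perm (Fin (m + 1))) (a : k) :
    (lotRep k m i * lotRep k m j * lotRep k m i) (single q a) =
      if q i.castSucc < q i.succ ∧ (q * sTrans m i) j.castSucc < (q * sTrans m i) j.succ ∧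
          (q * sTrans m i * sTrans m j) i.castSucc < (q * sTrans m i * sTrans m j) i.succ then
        (-1 : k) ^ (signExp i q + signExp j (q * sTrans m i) +
            signExp i (q * sTrans m i * sTrans m j)) •
          single (q * sTrans m i * sTrans m j * sTrans m i) a
      else 0 := by
  rw [Module.End.mul_apply, lotRep_single]
  by_cases hi : q i.castSucc < q i.succ
  · rw [if_pos hi, map_smul, lotRep_mul_lotRep_single]
    by_cases h : (q * sTrans m i) j.castSucc < (q * sTrans m i) j.succ ∧
        (q * sTrans m i * sTrans m j) i.castSucc < (q * sTrans m i * sTrans m j) i.succ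
    · rw [if_pos h, if_pos ⟨hi, h⟩, smul_smul, ← pow_add, ← add_assoc]
    · rw [if_neg h, if_neg fun h' ↦ h h'.2, smul_zero]
  · rw [if_neg hi, if_neg fun h ↦ hi h.1, map_zero]

lemma lotRep_mul_self (i : Fin m) : lotRep k m i * lotRep k m i = 0 := by
  refine lhom_ext fun q a ↦ ?_
  rw [lotRep_mul_lotRep_single, if_neg]
  · rfl
  · simp only [Perm.mul_apply, sTrans_apply_castSucc, sTrans_apply_succ]
    exact fun h ↦ lt_asymm h.1 h.2

lemma lotRep_anticomm_of_lt (hij : (i : ℕ) + 1 < j) :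
    lotRep k m i * lotRep k m j + lotRep k m j * lotRep k m i = 0 := by
  refine lhom_ext fun q a ↦ ?_
  rw [LinearMap.add_apply, lotRep_mul_lotRep_single, lotRep_mul_lotRep_single]
  simp only [Perm.mul_apply, sTrans_apply_castSucc_of_far (Or.inl hij),
    sTrans_apply_succ_of_far (Or.inl hij), sTrans_apply_castSucc_of_far (Or.inr hij),
    sTrans_apply_succ_of_far (Or.inr hij), and_comm (a := q j.castSucc < q j.succ),
    LinearMap.zero_apply]
  split_ifs with h
  · rw [signExp_mul_sTrans_of_lt hij, signExp_mul_sTrans_of_gt hij h.1, mul_assoc q,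
      ← sTrans_commute (Or.inl hij), ← mul_assoc, ← add_smul]
    convert zero_smul k _
    ring
  · rw [add_zero]

lemma lotRep_anticomm (h : (i : ℕ) + 1 < j ∨ (j : ℕ) + 1 < i) :
    lotRep k m i * lotRep k m j + lotRep k m j * lotRep k m i = 0 := by
  rcases h with h | h
  · exact lotRep_anticomm_of_lt h
  · exact (add_comm _ _).trans (lotRep_anticomm_of_lt h)

lemma lotRep_braid (hj : (j : ℕ) = i + 1) :
    lotRep k m i * lotRep k m j * lotRep k m i = lotRep k m j * lotRep k m i * lotRep k m j := by
  refine lhom_ext fun q a ↦ ?_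
  rw [lotRep_mul_lotRep_mul_lotRep_single, lotRep_mul_lotRep_mul_lotRep_single]
  obtain ⟨hcs, hij, hji₀, hji₁, hjj⟩ := sTrans_apply_of_adjacent hj
  simp only [Perm.mul_apply, sTrans_apply_castSucc, sTrans_apply_succ, hcs, hij, hji₀, hji₁,
    hjj]
  by_cases h : q i.castSucc < q i.succ ∧ q i.succ < q j.succ
  · rw [if_pos ⟨h.1, h.1.trans h.2, h.2⟩, if_pos ⟨h.2, h.1.trans h.2, h.1⟩, mul_sTrans_braid q hj]
    congr 1
    refine neg_one_pow_congr ?_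
    rw [← ZMod.natCast_eq_zero_iff_even, ← ZMod.natCast_eq_zero_iff_even, signExp_braid hj h.1 h.2]
  · rw [if_neg fun h' ↦ h ⟨h'.1, h'.2.2⟩, if_neg fun h' ↦ h ⟨h'.2.2, h'.1⟩]

end Representation

section Basis

open Finsupp Submodule

variable (k : Type) [Field k] (m : ℕ)

noncomputable def lotRepHom : LOT k m →ₐ[k] Module.End k (Perm (Fin (m + 1)) →₀ k) :=
  RingQuot.liftAlgHom k ⟨FreeAlgebra.lift k (lotRep k m), fun _ _ h ↦ by
    induction h with
    | sq i => simpa using lotRep_mul_self i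
    | anticomm i j h => simpa using lotRep_anticomm h
    | braid i j h => simpa using lotRep_braid h⟩

variable {k m}

lemma lotRepHom_lotSigma (i : Fin m) : lotRepHom k m (lotSigma k m i) = lotRep k m i := by
  rw [lotSigma, lotRepHom, RingQuot.liftAlgHom_mkAlgHom_apply, FreeAlgebra.lift_ι_apply]

lemma lotRepHom_sigmaWord_single_one {w : Perm (Fin (m + 1))} {l : List (Fin m)}
    (h : IsReducedWord m w l) :
    ∃ e : ℕ, lotRepHom k m (sigmaWord k m l) (single 1 1) = (-1 : k) ^ e • single w⁻¹ 1 := by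
  induction l generalizing w with
  | nil => exact ⟨0, by simp [← h.1]⟩
  | cons i l ih =>
    obtain ⟨hi, hl⟩ := isReducedWord_cons_iff.1 h
    obtain ⟨e, he⟩ := ih hl
    refine ⟨e + signExp i (w⁻¹ * sTrans m i), ?_⟩
    rw [sigmaWord_cons, map_mul, Module.End.mul_apply, he, map_smul, lotRepHom_lotSigma,
      lotRep_single, inv_sTrans_mul, if_pos, smul_smul, ← pow_add, mul_sTrans_mul_sTrans]
    simpa only [Perm.mul_apply, sTrans_apply_castSucc, sTrans_apply_succ] using hi

lemma adjoin_range_lotSigma : Algebra.adjoin k (Set.range (lotSigma k m)) = ⊤ := by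
  have h : Set.range (lotSigma k m) =
      RingQuot.mkAlgHom k (LOTRel k m) '' Set.range (FreeAlgebra.ι k) := by
    rw [← Set.range_comp]
    rfl
  rw [h, ← AlgHom.map_adjoin, FreeAlgebra.adjoin_range_ι, Algebra.map_top, AlgHom.range_eq_top]
  exact RingQuot.mkAlgHom_surjective k (LOTRel k m)

variable {c : Perm (Fin (m + 1)) → List (Fin m)}

lemma lotSigma_mul_sigmaWord_mem_span (hc : ∀ w, IsReducedWord m w (c w)) (i : Fin m)
    (w : Perm (Fin (m + 1))) :
    lotSigma k m i * sigmaWord k m (c w) ∈ span k (Set.range fun w ↦ sigmaWord k m (c w)) := by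
  rcases ascent_or_descent w⁻¹ i with h | h
  · obtain ⟨ε, hε⟩ :=
      sigmaWord_eq_units_smul_of_isReducedWord (k := k) ((hc w).cons h) (hc (sTrans m i * w))
    rw [← sigmaWord_cons, hε, Units.smul_def]
    exact zsmul_mem (subset_span (Set.mem_range_self (sTrans m i * w))) _
  · obtain ⟨r, hr⟩ := exists_isReducedWord (sTrans m i * w)
    have hr' : IsReducedWord m w (i :: r) := by
      simpa only [sTrans_mul_sTrans_mul] using hr.cons (i := i) (by
        simpa only [inv_sTrans_mul, Perm.mul_apply, sTrans_apply_castSucc,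
          sTrans_apply_succ] using h)
    obtain ⟨ε, hε⟩ := sigmaWord_eq_units_smul_of_isReducedWord (k := k) (hc w) hr'
    rw [hε, mul_smul_comm, sigmaWord_cons, ← mul_assoc, lotSigma_mul_self, zero_mul,
      Units.smul_def]
    exact zsmul_mem (zero_mem _) _

lemma span_range_sigmaWord (hc : ∀ w, IsReducedWord m w (c w)) :
    span k (Set.range fun w ↦ sigmaWord k m (c w)) = ⊤ := by
  set S := span k (Set.range fun w ↦ sigmaWord k m (c w))
  have hmul (i : Fin m) (y : LOT k m) (hy : y ∈ S) : lotSigma k m i * y ∈ S := by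
    induction hy using span_induction with
    | mem y hy =>
      obtain ⟨w, rfl⟩ := hy
      exact lotSigma_mul_sigmaWord_mem_span hc i w
    | zero => simp
    | add y z _ _ hy hz => simpa [mul_add] using add_mem hy hz
    | smul a y _ hy => simpa [mul_smul_comm] using S.smul_mem a hy
  have hone : (1 : LOT k m) ∈ S := by
    have hnil : c 1 = [] := List.eq_nil_of_length_eq_zero (Nat.le_zero.1 ((hc 1).2 [] rfl))
    have h1 := subset_span (R := k) (Set.mem_range_self (f := fun w ↦ sigmaWord k m (c w)) 1)
    simpa [hnil] using h1
  rw [eq_top_iff, ← Algebra.top_toSubmodule, ← adjoin_range_lotSigma, Algebra.adjoin_eq_span,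
    span_le]
  intro y hy
  induction hy using Submonoid.closure_induction_left with
  | one => exact hone
  | mul_left x hx y _ ih =>
    obtain ⟨i, rfl⟩ := hx
    exact hmul i y ih

lemma linearIndependent_sigmaWord (hc : ∀ w, IsReducedWord m w (c w)) :
    LinearIndependent k fun w ↦ sigmaWord k m (c w) := by
  choose e he using fun w ↦ lotRepHom_sigmaWord_single_one (k := k) (hc w)
  let Φ := (LinearMap.applyₗ (R := k) (single 1 1 : Perm (Fin (m + 1)) →₀ k)).comp
    (lotRepHom k m).toLinearMap
  refine LinearIndependent.of_comp Φ ?_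
  have hΦ : Φ ∘ (fun w ↦ sigmaWord k m (c w)) =
      (fun w ↦ (-1 : kˣ) ^ e w) • fun w ↦ single w⁻¹ (1 : k) :=
    funext fun w ↦ by simp [Φ, he, Units.smul_def]
  rw [hΦ]
  exact ((Finsupp.basisSingleOne.linearIndependent).comp _ inv_injective).units_smul _

end Basis

theorem stmt0 (k : Type) [Field k] (m : ℕ)
    (c : Equiv.Perm (Fin (m + 1)) → List (Fin m))
    (hc : ∀ w, IsReducedWord m w (c w)) :
    LinearIndependent k (fun w : Equiv.Perm (Fin (m + 1)) => sigmaWord k m (c w)) ∧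
    Submodule.span k
      (Set.range (fun w : Equiv.Perm (Fin (m + 1)) => sigmaWord k m (c w))) = ⊤ ∧
    Module.finrank k (LOT k m) = Nat.factorial (m + 1) := by
  have hli := linearIndependent_sigmaWord (k := k) hc
  have hspan := span_range_sigmaWord (k := k) hc
  refine ⟨hli, hspan, ?_⟩
  rw [Module.finrank_eq_card_basis (Module.Basis.mk hli hspan.ge), Fintype.card_perm,
    Fintype.card_fin]
end

section
/- Let A be a differential graded k-algebra and x ∈ A^{−1} an element such that e := d(x) is an idempotent of A. Then d(e) = 0, so the left ideal Ae is stable under d; and the k-linear map h : Ae → Ae defined on homogeneous elements a ∈ A^i ∩ Ae by h(a) = (−1)^i a x e satisfies h∘d + d∘h = id on Ae. In particular the complex Ae is contractible. -/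
/-!
Since `e = d x` is an idempotent of degree `0` with `d e = d (d x) = 0`, every `a ∈ Ae`
satisfies `a e = a`, and the Leibniz rule gives `d (a e) = (d a) e` for homogeneous `a`; in
particular `d (x e) = e`. With `y := x e` and `h a := (-1)ⁱ a y` on `Aⁱ`, the Leibniz rule gives
`d (h a) = (-1)ⁱ (d a) y + a (d y) = -h (d a) + a e`, the homotopy identity on homogeneous
`a ∈ Ae`. As `e` has degree `0`, the homogeneous components of `b e` are the `bᵢ e`, so every
statement about `Ae` reduces to its homogeneous elements.
-/

open LinearMap DirectSum

theorem neg_one_zpow_smul_neg_one_zpow_smul {k M : Type*} [Field k] [AddCommGroup M] [Module k M]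
    (z : ℤ) (b : M) : ((-1 : k) ^ z) • ((-1 : k) ^ z) • b = b := by
  rw [smul_smul, ← mul_zpow, neg_one_mul, neg_neg, one_zpow, one_smul]

section

variable {k A : Type*} [Field k] [Ring A] [Algebra k A] (𝒜 : ℤ → Submodule k A)

def IsGradedLeibniz (d : A →ₗ[k] A) : Prop :=
  ∀ (z : ℤ) (a b : A), a ∈ 𝒜 z → d (a * b) = d a * b + ((-1 : k) ^ z) • (a * d b)

theorem mul_eq_self_of_mem_range_mulRight {e a : A} (he : IsIdempotentElem e)
    (ha : a ∈ range (mulRight k e)) : a * e = a := by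
  obtain ⟨b, rfl⟩ := ha
  simp [mul_assoc, he.eq]

theorem IsGradedLeibniz.map_mul_of_map_eq_zero {d : A →ₗ[k] A} (hd : IsGradedLeibniz 𝒜 d)
    {z : ℤ} {a e : A} (ha : a ∈ 𝒜 z) (hde : d e = 0) : d (a * e) = d a * e := by
  simp [hd z a e ha, hde]

theorem IsGradedLeibniz.map_mem_range_mulRight {d : A →ₗ[k] A} (hd : IsGradedLeibniz 𝒜 d)
    {z : ℤ} {a e : A} (he : IsIdempotentElem e) (hde : d e = 0) (ha : a ∈ 𝒜 z)
    (hae : a ∈ range (mulRight k e)) : d a ∈ range (mulRight k e) := by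
  rw [← mul_eq_self_of_mem_range_mulRight he hae, hd.map_mul_of_map_eq_zero 𝒜 ha hde]
  exact ⟨d a, rfl⟩

variable [GradedRing 𝒜]

theorem range_mulRight_le_of_homogeneous {e : A} (he : e ∈ 𝒜 0) {S : Submodule k A}
    (hS : ∀ (z : ℤ) (a : A), a ∈ 𝒜 z → a ∈ range (mulRight k e) → a ∈ S) :
    range (mulRight k e) ≤ S := by
  classical
  rintro _ ⟨b, rfl⟩
  rw [← sum_support_decompose 𝒜 (mulRight k e b)]
  refine Submodule.sum_mem _ fun i _ => hS i _ (SetLike.coe_mem _) ⟨decompose 𝒜 b i, ?_⟩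
  exact (coe_decompose_mul_of_right_mem_zero 𝒜 he).symm

noncomputable def gradedSignMul (y : A) : A →ₗ[k] A :=
  (toModule k ℤ A fun z => ((-1 : k) ^ z) • (mulRight k y).comp (𝒜 z).subtype).comp
    (decomposeLinearEquiv 𝒜).toLinearMap

theorem gradedSignMul_of_mem (y : A) {z : ℤ} {a : A} (ha : a ∈ 𝒜 z) :
    gradedSignMul 𝒜 y a = ((-1 : k) ^ z) • (a * y) := by
  have hdec : decompose 𝒜 a = lof k ℤ (fun i => 𝒜 i) z ⟨a, ha⟩ := by
    rw [decompose_of_mem 𝒜 ha, lof_eq_of]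
  simp [gradedSignMul, decomposeLinearEquiv_apply, hdec, toModule_lof]

theorem gradedSignMul_mul_mem_range_mulRight (y e a : A) :
    gradedSignMul 𝒜 (y * e) a ∈ range (mulRight k e) := by
  classical
  rw [← sum_support_decompose 𝒜 a, map_sum]
  refine Submodule.sum_mem _ fun i _ => ?_
  rw [gradedSignMul_of_mem 𝒜 _ (SetLike.coe_mem _)]
  exact Submodule.smul_mem _ _ ⟨(decompose 𝒜 a i : A) * y, by simp [mul_assoc]⟩

theorem IsGradedLeibniz.gradedSignMul_map_add_map_gradedSignMul {d : A →ₗ[k] A}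
    (hd : IsGradedLeibniz 𝒜 d) (hdeg : ∀ (z : ℤ) (a : A), a ∈ 𝒜 z → d a ∈ 𝒜 (z + 1))
    {y e : A} (hy : d y = e) {z : ℤ} {a : A} (ha : a ∈ 𝒜 z) (hae : a * e = a) :
    gradedSignMul 𝒜 y (d a) + d (gradedSignMul 𝒜 y a) = a := by
  have hsign : (-1 : k) ^ (z + 1) = -(-1 : k) ^ z := by
    rw [zpow_add_one₀ (by norm_num)]; ring
  rw [gradedSignMul_of_mem 𝒜 y (hdeg z a ha), gradedSignMul_of_mem 𝒜 y ha, map_smul,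
    hd z a y ha, hy, hae, smul_add, neg_one_zpow_smul_neg_one_zpow_smul, hsign, neg_smul,
    neg_add_cancel_left]

end

theorem stmt5 (k : Type) [Field k] (A : Type) [Ring A] [Algebra k A]
    (𝒜 : ℤ → Submodule k A) [GradedRing 𝒜]
    (d : A →ₗ[k] A)
    (hdeg : ∀ (z : ℤ) (a : A), a ∈ 𝒜 z → d a ∈ 𝒜 (z + 1))
    (hdd : ∀ a : A, d (d a) = 0)
    (hLeibniz : ∀ (z : ℤ) (a b : A), a ∈ 𝒜 z →
      d (a * b) = d a * b + ((-1 : k) ^ z) • (a * d b))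
    (x : A) (hx : x ∈ 𝒜 (-1)) (hidem : d x * d x = d x) :
    -- `e = d x`, and `Ae` is the left ideal `A e`, i.e. the range of right
    -- multiplication by `e`.
    let e := d x
    let Ae : Submodule k A := LinearMap.range (LinearMap.mulRight k e)
    d e = 0 ∧
    (∀ a ∈ Ae, d a ∈ Ae) ∧
    ∃ h : A →ₗ[k] A,
      (∀ a ∈ Ae, h a ∈ Ae) ∧
      (∀ (z : ℤ) (a : A), a ∈ 𝒜 z → a ∈ Ae → h a = ((-1 : k) ^ z) • (a * x * e)) ∧
      (∀ a ∈ Ae, h (d a) + d (h a) = a) := by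
  intro e Ae
  have hd : IsGradedLeibniz 𝒜 d := hLeibniz
  have he : IsIdempotentElem e := hidem
  have hde : d e = 0 := hdd x
  have he0 : e ∈ 𝒜 0 := by simpa using hdeg (-1) x hx
  have hxe : d (x * e) = e := by rw [hd.map_mul_of_map_eq_zero 𝒜 hx hde]; exact hidem
  refine ⟨hde, ?_, gradedSignMul 𝒜 (x * e),
    fun a _ => gradedSignMul_mul_mem_range_mulRight 𝒜 x e a,
    fun z a ha _ => by rw [gradedSignMul_of_mem 𝒜 _ ha, mul_assoc], ?_⟩
  · exact range_mulRight_le_of_homogeneous 𝒜 he0 (S := Ae.comap d)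
      fun _ _ ha hae => hd.map_mem_range_mulRight 𝒜 he hde ha hae
  · exact range_mulRight_le_of_homogeneous 𝒜 he0
      (S := eqLocus (gradedSignMul 𝒜 (x * e) ∘ₗ d + d ∘ₗ gradedSignMul 𝒜 (x * e)) LinearMap.id)
      fun _ _ ha hae => hd.gradedSignMul_map_add_map_gradedSignMul 𝒜 hdeg hxe ha
        (mul_eq_self_of_mem_range_mulRight he hae)
end

section
/- Let A be a differential graded k-algebra and x ∈ A^{−1} an element such that e := d(x) is an idempotent of A. Then the (nonunital) dg subalgebra (1−e)A(1−e) ⊆ A is stable under d, and the inclusion (1−e)A(1−e) ⊆ A is a quasi-isomorphism: it induces an isomorphism of homology groups (ker d ∩ (1−e)A(1−e)) / d((1−e)A(1−e)) ≅ ker d / im d. -/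
/-!
Write `e = d x` and `p = 1 - e`. Since `x` has degree `-1`, the idempotent `e` is a cycle of
degree `0`, so `d` commutes with multiplication by `p` on either side; hence `d` preserves
`p A p`, and a boundary `p a p = d c` is already the boundary of `p c p`. For a homogeneous cycle
`a` of degree `z`, the graded Leibniz rule gives
`a - p a p = e a + p a e = d (x a + (-1)^z p a x)`,
and a general cycle is the sum of its homogeneous components, which are cycles again.
-/

open DirectSum

section GradedDifferential

variable {k A : Type*} [Field k] [Ring A] [Algebra k A] (𝒜 : ℤ → Submodule k A) (d : A →ₗ[k] A)

def HasDegreeOne : Prop :=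
  ∀ (z : ℤ) (a : A), a ∈ 𝒜 z → d a ∈ 𝒜 (z + 1)

def IsGradedDerivation : Prop :=
  ∀ (z : ℤ) (a b : A), a ∈ 𝒜 z → d (a * b) = d a * b + ((-1 : k) ^ z) • (a * d b)

variable {𝒜 d}

theorem HasDegreeOne.decompose_map [Decomposition 𝒜] (hdeg : HasDegreeOne 𝒜 d) (a : A) (w : ℤ) :
    (decompose 𝒜 (d a) w : A) = d (decompose 𝒜 a (w - 1)) := by
  induction a using DirectSum.Decomposition.inductionOn 𝒜 generalizing w with
  | zero => simp
  | add a b ha hb =>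
    simp only [map_add, decompose_add, DirectSum.add_apply, Submodule.coe_add, ha, hb]
  | @homogeneous i a =>
    obtain ⟨a, ha⟩ := a
    by_cases hw : w = i + 1
    · subst hw
      rw [decompose_of_mem_same 𝒜 (hdeg i a ha), add_sub_cancel_right,
        decompose_of_mem_same 𝒜 ha]
    · rw [decompose_of_mem_ne 𝒜 (hdeg i a ha) (fun h => hw h.symm),
        decompose_of_mem_ne 𝒜 ha (by omega), map_zero]

theorem HasDegreeOne.map_decompose_eq_zero [Decomposition 𝒜] (hdeg : HasDegreeOne 𝒜 d) {a : A}
    (ha : d a = 0) (z : ℤ) : d (decompose 𝒜 a z) = 0 := by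
  rw [← add_sub_cancel_right z 1, ← hdeg.decompose_map, ha, decompose_zero]
  rfl

theorem IsGradedDerivation.map_one [SetLike.GradedOne 𝒜] (hL : IsGradedDerivation 𝒜 d) :
    d 1 = 0 := by
  simpa using hL 0 1 1 SetLike.GradedOne.one_mem

theorem IsGradedDerivation.map_mul_left [SetLike.GradedOne 𝒜] (hL : IsGradedDerivation 𝒜 d)
    {p : A} (hp : p ∈ 𝒜 0) (hdp : d p = 0) (a : A) : d (p * a) = p * d a := by
  rw [hL 0 p a hp, hdp, zero_mul, zero_add, zpow_zero, one_smul]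

theorem IsGradedDerivation.map_mul_right [Decomposition 𝒜] (hL : IsGradedDerivation 𝒜 d)
    {p : A} (hdp : d p = 0) (a : A) : d (a * p) = d a * p := by
  induction a using DirectSum.Decomposition.inductionOn 𝒜 with
  | zero => simp
  | add a b ha hb => rw [add_mul, map_add, map_add, ha, hb, add_mul]
  | @homogeneous i a => rw [hL i a p a.2, hdp, mul_zero, smul_zero, add_zero]

theorem IsGradedDerivation.map_conj [GradedRing 𝒜] (hL : IsGradedDerivation 𝒜 d)
    {p : A} (hp : p ∈ 𝒜 0) (hdp : d p = 0) (a : A) : d (p * (a * p)) = p * (d a * p) := by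
  rw [hL.map_mul_left hp hdp, hL.map_mul_right hdp]

theorem IsGradedDerivation.map_conj_eq_of_map_eq [GradedRing 𝒜] (hL : IsGradedDerivation 𝒜 d)
    {p : A} (hp : p ∈ 𝒜 0) (hdp : d p = 0) (hpp : p * p = p) {a c : A}
    (hc : d c = p * (a * p)) : d (p * (c * p)) = p * (a * p) := by
  rw [hL.map_conj hp hdp, hc, ← mul_assoc, ← mul_assoc, hpp, mul_assoc, mul_assoc, hpp]

theorem IsGradedDerivation.sub_conj_eq_map_of_mem [SetLike.GradedOne 𝒜] (hL : IsGradedDerivation 𝒜 d)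
    {x : A} (hx : x ∈ 𝒜 (-1)) (hp : 1 - d x ∈ 𝒜 0) (hdp : d (1 - d x) = 0)
    {z : ℤ} {a : A} (ha : a ∈ 𝒜 z) (hda : d a = 0) :
    a - (1 - d x) * (a * (1 - d x)) = d (x * a + ((-1 : k) ^ z) • ((1 - d x) * (a * x))) := by
  have hxa : d (x * a) = d x * a := by
    rw [hL (-1) x a hx, hda, mul_zero, smul_zero, add_zero]
  have hpax : d ((1 - d x) * (a * x)) = ((-1 : k) ^ z) • ((1 - d x) * (a * d x)) := by
    rw [hL.map_mul_left hp hdp, hL z a x ha, hda, zero_mul, zero_add, mul_smul_comm]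
  have hsign : ((-1 : k) ^ z) * ((-1 : k) ^ z) = 1 := by
    rw [← mul_zpow, neg_one_mul, neg_neg, one_zpow]
  rw [map_add, map_smul, hxa, hpax, smul_smul, hsign, one_smul]
  noncomm_ring

theorem sub_conj_mem_range_of_map_eq_zero [GradedRing 𝒜] (hdeg : HasDegreeOne 𝒜 d)
    (hL : IsGradedDerivation 𝒜 d) {x : A} (hx : x ∈ 𝒜 (-1)) (hp : 1 - d x ∈ 𝒜 0)
    (hdp : d (1 - d x) = 0) {a : A} (hda : d a = 0) :
    a - (1 - d x) * (a * (1 - d x)) ∈ LinearMap.range d := by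
  classical
  let f : A →ₗ[k] A := LinearMap.id -
    (LinearMap.mulLeft k (1 - d x)).comp (LinearMap.mulRight k (1 - d x))
  change f a ∈ _
  rw [← sum_support_decompose 𝒜 a, map_sum]
  refine Submodule.sum_mem _ fun z _ => ⟨_, (hL.sub_conj_eq_map_of_mem hx hp hdp (decompose 𝒜 a z).2
    (hdeg.map_decompose_eq_zero hda z)).symm⟩

end GradedDifferential

theorem stmt6 (k : Type) [Field k] (A : Type) [Ring A] [Algebra k A]
    (𝒜 : ℤ → Submodule k A) [GradedRing 𝒜]
    (d : A →ₗ[k] A)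
    (hdeg : ∀ (z : ℤ) (a : A), a ∈ 𝒜 z → d a ∈ 𝒜 (z + 1))
    (hdd : ∀ a : A, d (d a) = 0)
    (hLeibniz : ∀ (z : ℤ) (a b : A), a ∈ 𝒜 z →
      d (a * b) = d a * b + ((-1 : k) ^ z) • (a * d b))
    (x : A) (hx : x ∈ 𝒜 (-1)) (hidem : d x * d x = d x) :
    let e := d x
    let B : Submodule k A :=
      LinearMap.range ((LinearMap.mulLeft k (1 - e)).comp (LinearMap.mulRight k (1 - e)))
    -- `B = (1-e) A (1-e)` is stable under `d`
    (∀ b ∈ B, d b ∈ B) ∧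
    -- surjectivity of the induced map on homology
    (∀ a : A, d a = 0 → ∃ b ∈ B, d b = 0 ∧ ∃ c : A, a - b = d c) ∧
    -- injectivity of the induced map on homology
    (∀ b ∈ B, d b = 0 → (∃ c : A, d c = b) → ∃ c ∈ B, d c = b) := by
  intro e B
  have hL : IsGradedDerivation 𝒜 d := hLeibniz
  have hp : 1 - e ∈ 𝒜 0 :=
    sub_mem SetLike.GradedOne.one_mem (by simpa using hdeg (-1) x hx)
  have hdp : d (1 - e) = 0 := by rw [map_sub, hL.map_one, hdd, sub_zero]
  have hpp : (1 - e) * (1 - e) = 1 - e := by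
    rw [sub_mul, one_mul, mul_sub, mul_one, hidem, sub_self, sub_zero]
  refine ⟨?_, fun a hda => ?_, ?_⟩
  · rintro _ ⟨a, rfl⟩
    exact ⟨d a, (hL.map_conj hp hdp a).symm⟩
  · obtain ⟨c, hc⟩ := sub_conj_mem_range_of_map_eq_zero hdeg hL hx hp hdp hda
    exact ⟨_, ⟨a, rfl⟩, by simp [hL.map_conj hp hdp, hda], c, hc.symm⟩
  · rintro _ ⟨a, rfl⟩ - ⟨c, hc⟩
    exact ⟨_, ⟨c, rfl⟩, hL.map_conj_eq_of_map_eq hp hdp hpp hc⟩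
end

section
/- For every n ≥ 2, the differential graded algebra H_n^- has trivial homology: ker d = im d, where d is the differential on H_n^- determined by d(σ_i) = 1 and the graded Leibniz rule. -/
theorem LinearMap.ker_eq_range_of_contractingHomotopy {R M : Type*} [Semiring R]
    [AddCommMonoid M] [Module R M] (d h : M →ₗ[R] M) (hdd : ∀ a, d (d a) = 0)
    (hdh : ∀ a, d (h a) + h (d a) = a) :
    LinearMap.ker d = LinearMap.range d := by
  apply le_antisymm
  · intro a ha
    refine ⟨h a, ?_⟩
    simpa [LinearMap.mem_ker.mp ha] using hdh a
  · rintro _ ⟨b, rfl⟩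
    exact hdd b

theorem stmt8_general (k : Type) [Field k] (m : ℕ) (hm : 1 ≤ m)
    (𝒜 : ℤ → Submodule k (LOT k m))
    (hσ : ∀ i : Fin m, lotSigma k m i ∈ 𝒜 (-1))
    (d : LOT k m →ₗ[k] LOT k m)
    (hσ1 : ∀ i : Fin m, d (lotSigma k m i) = 1)
    (hLeibniz : ∀ (z : ℤ) (a b : LOT k m), a ∈ 𝒜 z →
      d (a * b) = d a * b + ((-1 : k) ^ z) • (a * d b))
    (hdd : ∀ a, d (d a) = 0) :
    LinearMap.ker d = LinearMap.range d := by
  -- The scalar action in `hLeibniz` is `RingQuot`'s own `SMul`, which `neg_smul` does not match.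
  have neg_one_smul' (x : LOT k m) : (-1 : k) • x = -x := neg_one_smul k x
  refine d.ker_eq_range_of_contractingHomotopy (LinearMap.mulLeft k (lotSigma k m ⟨0, hm⟩))
    hdd fun a => ?_
  rw [LinearMap.mulLeft_apply, LinearMap.mulLeft_apply, hLeibniz (-1) _ a (hσ _), hσ1, one_mul,
    zpow_neg_one, inv_neg, inv_one, neg_one_smul', neg_add_cancel_right]

theorem stmt8 (k : Type) [Field k] (m : ℕ) (hm : 1 ≤ m)
    (𝒜 : ℤ → Submodule k (LOT k m)) [GradedRing 𝒜]
    (hσ : ∀ i : Fin m, lotSigma k m i ∈ 𝒜 (-1))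
    (d : LOT k m →ₗ[k] LOT k m)
    (hdeg : ∀ (z : ℤ) a, a ∈ 𝒜 z → d a ∈ 𝒜 (z + 1))
    (hσ1 : ∀ i : Fin m, d (lotSigma k m i) = 1)
    (hLeibniz : ∀ (z : ℤ) (a b : LOT k m), a ∈ 𝒜 z →
      d (a * b) = d a * b + ((-1 : k) ^ z) • (a * d b))
    (hdd : ∀ a, d (d a) = 0) :
    LinearMap.ker d = LinearMap.range d :=
  stmt8_general k m hm 𝒜 hσ d hσ1 hLeibniz hdd
end

section
/- The center of the nilHecke algebra H_m consists exactly of the operators of multiplication by symmetric polynomials; that is, Z(H_m) is isomorphic, via the multiplication-operator embedding, to the ring of symmetric polynomials k[x_1, …, x_m]^{S_m}. -/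
/-!
An operator `T` commuting with every multiplication by `x_j` commutes with multiplication by every
polynomial, hence is multiplication by `p = T 1`. It then commutes with `∂_i` iff `s_i p = p`:
evaluating `∂_i (p f) = p ∂_i f` at `f = 1` gives `∂_i p = 0` since `∂_i 1 = 0`, and conversely
`s_i`-invariance of `p` gives this Leibniz rule. The adjacent transpositions generate `S_{m+1}`.
-/

open MvPolynomial

/-- The operator of multiplication by a polynomial `p` on `k[x_1, …, x_{m+1}]`. -/
noncomputable def mulOp (k : Type) [Field k] (m : ℕ) (p : MvPolynomial (Fin (m + 1)) k) :
    Module.End k (MvPolynomial (Fin (m + 1)) k) :=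
  LinearMap.mulLeft k p

/-- `D` is the family of divided difference operators `∂_i` on `k[x_1, …, x_{m+1}]`:
`∂_i f = (f - s_i f)/(x_i - x_{i+1})`, characterized by
`(x_i - x_{i+1}) * ∂_i f = f - s_i f`, where `s_i` transposes the variables
`x_i` and `x_{i+1}`.  (This characterizes `∂_i f` uniquely, since `k[x]` is a domain.) -/
def IsDividedDifferenceFamily (k : Type) [Field k] (m : ℕ)
    (D : Fin m → Module.End k (MvPolynomial (Fin (m + 1)) k)) : Prop :=
  ∀ (i : Fin m) (f : MvPolynomial (Fin (m + 1)) k),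
    (X i.castSucc - X i.succ) * D i f =
      f - rename (Equiv.swap i.castSucc i.succ) f

/-- The nilHecke algebra `H_{m+1}`: the subalgebra of `End_k(k[x_1, …, x_{m+1}])`
generated by the multiplication operators `x_1, …, x_{m+1}` and the divided difference
operators `∂_1, …, ∂_m`. -/
noncomputable def nilHecke (k : Type) [Field k] (m : ℕ)
    (D : Fin m → Module.End k (MvPolynomial (Fin (m + 1)) k)) :
    Subalgebra k (Module.End k (MvPolynomial (Fin (m + 1)) k)) :=
  Algebra.adjoin k
    ((Set.range fun j : Fin (m + 1) => mulOp k m (X j)) ∪ Set.range D)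

section MulOp

variable {k : Type} [Field k] {m : ℕ}

lemma commute_mulOp (p q : MvPolynomial (Fin (m + 1)) k) : Commute (mulOp k m p) (mulOp k m q) :=
  (Commute.all p q).map (Algebra.lmul k _)

lemma adjoin_range_mulOp_X :
    Algebra.adjoin k (Set.range fun j : Fin (m + 1) => mulOp k m (X j)) =
      (Algebra.lmul k (MvPolynomial (Fin (m + 1)) k)).range := by
  rw [← Algebra.map_top, ← adjoin_range_X, AlgHom.map_adjoin, ← Set.range_comp]
  rfl

lemma mulOp_mem_nilHecke (D : Fin m → Module.End k (MvPolynomial (Fin (m + 1)) k))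
    (p : MvPolynomial (Fin (m + 1)) k) : mulOp k m p ∈ nilHecke k m D := by
  refine Algebra.adjoin_mono Set.subset_union_left ?_
  rw [adjoin_range_mulOp_X]
  exact ⟨p, rfl⟩

lemma commute_mulOp_of_forall_commute_mulOp_X {T : Module.End k (MvPolynomial (Fin (m + 1)) k)}
    (hT : ∀ j, Commute T (mulOp k m (X j))) (p : MvPolynomial (Fin (m + 1)) k) :
    Commute T (mulOp k m p) := by
  refine Algebra.commute_of_mem_adjoin_of_forall_mem_commute (R := k)
    (s := Set.range fun j => mulOp k m (X j)) ?_ (by rintro _ ⟨j, rfl⟩; exact hT j)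
  rw [adjoin_range_mulOp_X]
  exact ⟨p, rfl⟩

lemma eq_mulOp_apply_one_of_forall_commute_mulOp
    {T : Module.End k (MvPolynomial (Fin (m + 1)) k)}
    (hT : ∀ p, Commute T (mulOp k m p)) : T = mulOp k m (T 1) := by
  refine LinearMap.ext fun f => ?_
  calc T f = T (mulOp k m f 1) := by rw [mulOp, LinearMap.mulLeft_apply, mul_one]
    _ = f * T 1 := LinearMap.congr_fun (hT f).eq 1
    _ = mulOp k m (T 1) f := mul_comm _ _

end MulOp

lemma MvPolynomial.isSymmetric_of_forall_rename_swap_castSucc_succ {R : Type*} [CommSemiring R]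
    {n : ℕ} {p : MvPolynomial (Fin (n + 1)) R}
    (hp : ∀ i : Fin n, rename (Equiv.swap i.castSucc i.succ) p = p) : p.IsSymmetric := by
  intro e
  have he : e ∈ Submonoid.closure (Set.range fun i : Fin n => Equiv.swap i.castSucc i.succ) := by
    rw [Equiv.Perm.mclosure_swap_castSucc_succ]; trivial
  induction he using Submonoid.closure_induction with
  | mem g hg => obtain ⟨i, rfl⟩ := hg; exact hp i
  | one => exact rename_id_apply p
  | mul g h _ _ ihg ihh => rw [Equiv.Perm.coe_mul, ← rename_rename, ihh, ihg]

lemma MvPolynomial.X_castSucc_sub_X_succ_ne_zero {R : Type*} [CommRing R] [Nontrivial R]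
    {n : ℕ} (i : Fin n) : (X i.castSucc - X i.succ : MvPolynomial (Fin (n + 1)) R) ≠ 0 :=
  sub_ne_zero.2 fun h => Fin.castSucc_lt_succ.ne (X_injective h)

namespace IsDividedDifferenceFamily

variable {k : Type} [Field k] {m : ℕ} {D : Fin m → Module.End k (MvPolynomial (Fin (m + 1)) k)}

lemma apply_one (hD : IsDividedDifferenceFamily k m D) (i : Fin m) : D i 1 = 0 := by
  have h := hD i 1
  rw [map_one (rename _), sub_self] at h
  exact (mul_eq_zero.1 h).resolve_left (X_castSucc_sub_X_succ_ne_zero i)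

lemma commute_mulOp_iff (hD : IsDividedDifferenceFamily k m D) (i : Fin m)
    (p : MvPolynomial (Fin (m + 1)) k) :
    Commute (D i) (mulOp k m p) ↔ rename (Equiv.swap i.castSucc i.succ) p = p := by
  constructor
  · intro hp
    have hDp : D i p = 0 := by
      simpa [mulOp, hD.apply_one i] using LinearMap.congr_fun hp.eq 1
    have h := hD i p
    rw [hDp, mul_zero] at h
    exact (sub_eq_zero.1 h.symm).symm
  · intro hp
    refine LinearMap.ext fun f => mul_left_cancel₀ (X_castSucc_sub_X_succ_ne_zero (R := k) i) ?_
    simp only [Module.End.mul_apply, mulOp, LinearMap.mulLeft_apply]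
    rw [hD i, map_mul, hp, mul_left_comm, hD i, mul_sub]

end IsDividedDifferenceFamily

theorem stmt10 (k : Type) [Field k] (m : ℕ)
    (D : Fin m → Module.End k (MvPolynomial (Fin (m + 1)) k))
    (hD : IsDividedDifferenceFamily k m D) :
    (∀ p : MvPolynomial (Fin (m + 1)) k, p.IsSymmetric → mulOp k m p ∈ nilHecke k m D) ∧
    (∀ T ∈ nilHecke k m D,
      ((∀ S ∈ nilHecke k m D, T * S = S * T) ↔
        ∃ p : MvPolynomial (Fin (m + 1)) k, p.IsSymmetric ∧ T = mulOp k m p)) := by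
  refine ⟨fun p _ => mulOp_mem_nilHecke D p, fun T _ => ⟨fun hT => ?_, ?_⟩⟩
  · have hT_mulOp : ∀ p, Commute T (mulOp k m p) := commute_mulOp_of_forall_commute_mulOp_X
      fun j => hT _ (Algebra.subset_adjoin (Or.inl ⟨j, rfl⟩))
    have hT_eq := eq_mulOp_apply_one_of_forall_commute_mulOp hT_mulOp
    refine ⟨T 1, isSymmetric_of_forall_rename_swap_castSucc_succ fun i => ?_, hT_eq⟩
    rw [← hD.commute_mulOp_iff, ← hT_eq]
    exact (hT _ (Algebra.subset_adjoin (Or.inr ⟨i, rfl⟩))).symm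
  · rintro ⟨p, hp, rfl⟩ S hS
    refine Algebra.commute_of_mem_adjoin_of_forall_mem_commute hS ?_
    rintro _ (⟨j, rfl⟩ | ⟨i, rfl⟩)
    · exact commute_mulOp p (X j)
    · exact ((hD.commute_mulOp_iff i p).2 (hp _)).symm
end

section
/- In U_q^+ = U_q^+(gl(1|2)), for all integers 0 < k < m the identity E_2^{(k)} E_1 E_2^{(m−k)} = [m−1 choose k] E_1 E_2^{(m)} + [m−1 choose k−1] E_2^{(m)} E_1 holds, where the coefficients are quantum binomials. -/
/-!
Put `x j = E₂ ^ j * E₁ * E₂ ^ (n - j)`. Multiplying the Serre relation by powers of `E₂` on both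
sides gives `x (j + 2) = (q + q⁻¹) x (j + 1) - x j`, the recurrence satisfied by the quantum
integers. So `x` is determined by its boundary values `x 0 = E₁ E₂ⁿ` and `x n = E₂ⁿ E₁`, namely
`[n] x j = [n - j] x 0 + [j] x n`. Dividing by `[j]! [n - j]!` and absorbing `[n]` into the quantum
binomials gives the identity.
-/

/-- The ground field `ℚ(q)` of rational functions. -/
abbrev Fq : Type := RatFunc ℚ

/-- The variable `q ∈ ℚ(q)`. -/
noncomputable def qq : Fq := RatFunc.X

/-- The defining relations of `U_q^+(gl(1|2))`:
`E₁² = 0` and `(q + q⁻¹) E₂E₁E₂ = E₁E₂² + E₂²E₁`, where `E₁ = ι 0`, `E₂ = ι 1`. -/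
inductive UqRel : FreeAlgebra Fq (Fin 2) → FreeAlgebra Fq (Fin 2) → Prop
  | oneSq : UqRel (FreeAlgebra.ι Fq 0 * FreeAlgebra.ι Fq 0) 0
  | serre : UqRel
      ((qq + qq⁻¹) • (FreeAlgebra.ι Fq 1 * FreeAlgebra.ι Fq 0 * FreeAlgebra.ι Fq 1))
      (FreeAlgebra.ι Fq 0 * FreeAlgebra.ι Fq 1 * FreeAlgebra.ι Fq 1 +
        FreeAlgebra.ι Fq 1 * FreeAlgebra.ι Fq 1 * FreeAlgebra.ι Fq 0)

/-- The algebra `U_q^+ = U_q^+(gl(1|2))`. -/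
abbrev Uq : Type := RingQuot UqRel

/-- The generator `E₁` (odd). -/
noncomputable def E₁ : Uq := RingQuot.mkAlgHom Fq UqRel (FreeAlgebra.ι Fq 0)

/-- The generator `E₂` (even). -/
noncomputable def E₂ : Uq := RingQuot.mkAlgHom Fq UqRel (FreeAlgebra.ι Fq 1)

/-- The quantum integer `[j] = (q^j - q^{-j})/(q - q^{-1})`. -/
noncomputable def qInt (j : ℕ) : Fq := (qq ^ j - qq⁻¹ ^ j) / (qq - qq⁻¹)

/-- The quantum factorial `[j]! = [1][2]⋯[j]`. -/
noncomputable def qFact (j : ℕ) : Fq := ∏ t ∈ Finset.range j, qInt (t + 1)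

/-- The quantum binomial `[a choose b] = [a]!/([b]![a-b]!)`. -/
noncomputable def qBinom (a b : ℕ) : Fq := qFact a / (qFact b * qFact (a - b))

/-- The quantum divided power `E₂^{(j)} = E₂^j / [j]!`. -/
noncomputable def E₂pow (j : ℕ) : Uq := (qFact j)⁻¹ • E₂ ^ j

section LucasSequence

variable {K : Type*} [CommRing K]

structure IsLucasU (c : K) (N : ℕ → K) : Prop where
  zero : N 0 = 0
  one : N 1 = 1
  succ_succ : ∀ k, N (k + 2) = c * N (k + 1) - N k

variable {c : K} {N : ℕ → K}

theorem IsLucasU.mul_sub_mul (hN : IsLucasU c N) (a m : ℕ) :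
    N (a + 1) * N (a + m) - N (a + m + 1) * N a = N m := by
  induction a with
  | zero => simp [hN.zero, hN.one]
  | succ a ih =>
    rw [← ih, show a + 1 + m = a + m + 1 by omega, show a + m + 1 + 1 = a + m + 2 by omega,
      hN.succ_succ a, hN.succ_succ (a + m)]
    ring

variable {V : Type*} [AddCommGroup V] [Module K V]

theorem IsLucasU.apply_succ_of_recurrence (hN : IsLucasU c N) {x : ℕ → V} {n : ℕ}
    (hx : ∀ k, k + 2 ≤ n → x (k + 2) = c • x (k + 1) - x k) :
    ∀ j, j + 1 ≤ n → x (j + 1) = N (j + 1) • x 1 - N j • x 0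
  | 0, _ => by simp [hN.zero, hN.one]
  | 1, hn => by
    rw [hx 0 hn, hN.succ_succ 0, hN.zero, hN.one]
    module
  | j + 2, hn => by
    rw [hx (j + 1) hn, hN.apply_succ_of_recurrence hx (j + 1) (by omega),
      hN.apply_succ_of_recurrence hx j (by omega), hN.succ_succ (j + 1), hN.succ_succ j]
    module

theorem IsLucasU.smul_apply_of_recurrence (hN : IsLucasU c N) {x : ℕ → V} {n : ℕ}
    (hx : ∀ k, k + 2 ≤ n → x (k + 2) = c • x (k + 1) - x k) {j : ℕ} (hj : j ≤ n) :
    N n • x j = N (n - j) • x 0 + N j • x n := by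
  obtain _ | a := j
  · simp [hN.zero]
  obtain ⟨m, rfl⟩ : ∃ m, n = a + m + 1 := ⟨n - a - 1, by omega⟩
  rw [show a + m + 1 - (a + 1) = m by omega, ← hN.mul_sub_mul a m,
    hN.apply_succ_of_recurrence hx a hj, hN.apply_succ_of_recurrence hx (a + m) le_rfl]
  module

theorem IsLucasU.smul_pow_mul_mul_pow {A : Type*} [Ring A] [Algebra K A] (hN : IsLucasU c N)
    {e₁ e₂ : A} (hrel : c • (e₂ * e₁ * e₂) = e₁ * e₂ * e₂ + e₂ * e₂ * e₁) {n j : ℕ} (hj : j ≤ n) :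
    N n • (e₂ ^ j * e₁ * e₂ ^ (n - j)) = N (n - j) • (e₁ * e₂ ^ n) + N j • (e₂ ^ n * e₁) := by
  refine (hN.smul_apply_of_recurrence (x := fun i ↦ e₂ ^ i * e₁ * e₂ ^ (n - i)) ?_ hj).trans ?_
  · intro k hk
    obtain ⟨m, rfl⟩ : ∃ m, n = k + 2 + m := ⟨n - k - 2, by omega⟩
    simp only [show k + 2 + m - (k + 2) = m by omega, show k + 2 + m - (k + 1) = m + 1 by omega,
      show k + 2 + m - k = m + 2 by omega]
    calc e₂ ^ (k + 2) * e₁ * e₂ ^ m = e₂ ^ k * (e₂ * e₂ * e₁) * e₂ ^ m := by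
          simp only [pow_succ, mul_assoc]
      _ = e₂ ^ k * (c • (e₂ * e₁ * e₂) - e₁ * e₂ * e₂) * e₂ ^ m := by rw [hrel, add_sub_cancel_left]
      _ = c • (e₂ ^ (k + 1) * e₁ * e₂ ^ (m + 1)) - e₂ ^ k * e₁ * e₂ ^ (m + 2) := by
          rw [pow_succ e₂ k, pow_succ' e₂ m, show m + 2 = 2 + m by omega, pow_add, sq]
          simp only [mul_sub, sub_mul, mul_smul_comm, smul_mul_assoc, mul_assoc]
  · simp

end LucasSequence

theorem qq_ne_zero : qq ≠ 0 := RatFunc.X_ne_zero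

theorem qq_pow_ne_one {m : ℕ} (hm : m ≠ 0) : qq ^ m ≠ 1 := by
  intro h
  have hX : (Polynomial.X : Polynomial ℚ) ^ m = 1 := by
    apply IsFractionRing.injective (Polynomial ℚ) (RatFunc ℚ)
    simpa [qq, RatFunc.algebraMap_X] using h
  simpa [zero_pow hm] using congrArg (Polynomial.eval 0) hX

theorem qq_pow_ne_inv_pow {m : ℕ} (hm : m ≠ 0) : qq ^ m ≠ qq⁻¹ ^ m := by
  intro h
  apply qq_pow_ne_one (show m + m ≠ 0 by omega)
  rw [pow_add]
  nth_rewrite 1 [h]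
  rw [← mul_pow, inv_mul_cancel₀ qq_ne_zero, one_pow]

theorem qq_sub_inv_ne_zero : qq - qq⁻¹ ≠ 0 := by
  simpa using sub_ne_zero.2 (qq_pow_ne_inv_pow one_ne_zero)

theorem qInt_ne_zero {m : ℕ} (hm : m ≠ 0) : qInt m ≠ 0 :=
  div_ne_zero (sub_ne_zero.2 (qq_pow_ne_inv_pow hm)) qq_sub_inv_ne_zero

theorem qFact_ne_zero (m : ℕ) : qFact m ≠ 0 :=
  Finset.prod_ne_zero_iff.2 fun _ _ ↦ qInt_ne_zero (Nat.succ_ne_zero _)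

theorem qFact_succ (m : ℕ) : qFact (m + 1) = qFact m * qInt (m + 1) :=
  Finset.prod_range_succ _ _

theorem isLucasU_qInt : IsLucasU (qq + qq⁻¹) qInt where
  zero := by simp [qInt]
  one := by simpa [qInt] using div_self qq_sub_inv_ne_zero
  succ_succ k := by
    simp only [qInt, mul_div_assoc', div_sub_div_same]
    congr 1
    linear_combination (qq⁻¹ ^ k - qq ^ k) * mul_inv_cancel₀ qq_ne_zero

theorem inv_qFact_mul_qFact {n j : ℕ} :
    (qFact j * qFact (n - j))⁻¹ = qBinom n j / qFact n := by
  rw [qBinom, div_div_cancel_left' (qFact_ne_zero n), inv_eq_one_div]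

theorem qBinom_mul_qInt_succ {m j : ℕ} (hj : j ≤ m) :
    qBinom m j * qInt (m + 1) = qBinom (m + 1) j * qInt (m + 1 - j) := by
  have hj' : m + 1 - j = m - j + 1 := by omega
  simp only [qBinom, hj', qFact_succ]
  have := qFact_ne_zero j
  have := qFact_ne_zero (m - j)
  have := qInt_ne_zero (Nat.succ_ne_zero (m - j))
  field_simp

theorem qBinom_succ_succ_mul_qInt_succ (m k : ℕ) :
    qBinom (m + 1) (k + 1) * qInt (k + 1) = qBinom m k * qInt (m + 1) := by
  simp only [qBinom, Nat.add_sub_add_right, qFact_succ]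
  have := qFact_ne_zero k
  have := qFact_ne_zero (m - k)
  have := qInt_ne_zero (Nat.succ_ne_zero k)
  field_simp

theorem smul_E₂_mul_E₁_mul_E₂ : (qq + qq⁻¹) • (E₂ * E₁ * E₂) = E₁ * E₂ * E₂ + E₂ * E₂ * E₁ := by
  simpa [E₁, E₂] using RingQuot.mkAlgHom_rel Fq UqRel.serre

theorem stmt15 (n j : ℕ) (h0 : 0 < j) (hn : j < n) :
    E₂pow j * E₁ * E₂pow (n - j) =
      qBinom (n - 1) j • (E₁ * E₂pow n) + qBinom (n - 1) (j - 1) • (E₂pow n * E₁) := by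
  obtain ⟨k, rfl⟩ : ∃ k, j = k + 1 := ⟨j - 1, by omega⟩
  obtain ⟨m, rfl⟩ : ∃ m, n = m + 1 := ⟨n - 1, by omega⟩
  have hsplit := isLucasU_qInt.smul_pow_mul_mul_pow smul_E₂_mul_E₁_mul_E₂ hn.le
  apply smul_right_injective Uq (qInt_ne_zero m.succ_ne_zero)
  calc qInt (m + 1) • (E₂pow (k + 1) * E₁ * E₂pow (m + 1 - (k + 1)))
      = (qBinom (m + 1) (k + 1) / qFact (m + 1)) •
          qInt (m + 1) • (E₂ ^ (k + 1) * E₁ * E₂ ^ (m + 1 - (k + 1))) := by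
        simp only [← inv_qFact_mul_qFact, E₂pow, smul_mul_assoc, mul_smul_comm, smul_smul]
        congr 1
        ring
    _ = qInt (m + 1) • (qBinom m (k + 1) • (E₁ * E₂pow (m + 1)) +
          qBinom m k • (E₂pow (m + 1) * E₁)) := by
        simp only [hsplit, E₂pow, smul_add, smul_mul_assoc, mul_smul_comm, smul_smul]
        congr 2
        · linear_combination -(qFact (m + 1))⁻¹ * qBinom_mul_qInt_succ (Nat.le_of_lt_succ hn)
        · linear_combination (qFact (m + 1))⁻¹ * qBinom_succ_succ_mul_qInt_succ m k
end
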